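/- arXiv:2402.17040 — 2 statements merged into one kernel-verified Lean document; each statement's English description precedes it below -/
import Mathlib

section
/- Suppose γ : T × T → [0,1] is a metric on the finite set T (with γ(v,v)=0). For the nonempty set U_SB = { φ ∈ ℝ^{|T|} : φ̲⁰_u ≤ φ_u ≤ φ̄⁰_u for all u, |φ_v − φ_u| ≤ γ(v,u) for all v,u }, the coordinate extrema satisfy, for every v ∈ T: min_{φ ∈ U_SB} φ_v = max_{u ∈ T} ( φ̲⁰_u − γ(u,v) ) and max_{φ ∈ U_SB} φ_v = min_{u ∈ T} ( φ̄⁰_u + γ(v,u) ). -/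
/-- With γ a metric on finite T and U_SB the nonempty box-and-pairwise
set, the coordinate extrema are given by
min φ_v = max_u (lo u − γ u v) and max φ_v = min_u (hi u + γ v u). -/
theorem stmt3 {T : Type*} [Fintype T] [Nonempty T]
    (lo hi : T → ℝ) (hlohi : ∀ u, lo u ≤ hi u)
    (γ : T → T → ℝ)
    (hγnn : ∀ u v, 0 ≤ γ u v)
    (hγ0 : ∀ u v, γ u v = 0 ↔ u = v)
    (hγsymm : ∀ u v, γ u v = γ v u)
    (hγtri : ∀ u v w, γ u w ≤ γ u v + γ v w)
    (hγle1 : ∀ u v, γ u v ≤ 1)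
    (USB : Set (T → ℝ))
    (hUSB : USB = {φ : T → ℝ | (∀ u, lo u ≤ φ u ∧ φ u ≤ hi u) ∧
        ∀ v u, |φ v - φ u| ≤ γ v u})
    (hne : USB.Nonempty) (v : T) :
    sInf ((fun φ : T → ℝ => φ v) '' USB)
        = Finset.univ.sup' Finset.univ_nonempty (fun u => lo u - γ u v) ∧
    sSup ((fun φ : T → ℝ => φ v) '' USB)
        = Finset.univ.inf' Finset.univ_nonempty (fun u => hi u + γ v u) := by
  obtain ⟨φ0, hφ0⟩ := hne
  rw [hUSB] at hφ0
  obtain ⟨hφ0box, hφ0lip⟩ := hφ0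
  set f : T → ℝ := fun t => Finset.univ.sup' Finset.univ_nonempty (fun u => lo u - γ u t)
    with hf
  set g : T → ℝ := fun t => Finset.univ.inf' Finset.univ_nonempty (fun u => hi u + γ t u)
    with hg
  have hγzero : ∀ t, γ t t = 0 := fun t => (hγ0 t t).2 rfl
  have hfdef : ∀ t u, lo u - γ u t ≤ f t := fun t u =>
    Finset.le_sup' (fun u => lo u - γ u t) (Finset.mem_univ u)
  have hfle : ∀ t (c : ℝ), (∀ u, lo u - γ u t ≤ c) → f t ≤ c := fun t c h =>
    Finset.sup'_le _ _ (fun u _ => h u)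
  have hgdef : ∀ t u, g t ≤ hi u + γ t u := fun t u =>
    Finset.inf'_le (fun u => hi u + γ t u) (Finset.mem_univ u)
  have hgle : ∀ t (c : ℝ), (∀ u, c ≤ hi u + γ t u) → c ≤ g t := fun t c h =>
    Finset.le_inf' _ _ (fun u _ => h u)
  have hflip : ∀ s t, f s ≤ f t + γ s t := by
    intro s t
    apply hfle
    intro u
    have h1 : γ u t ≤ γ u s + γ s t := hγtri u s t
    have h3 := hfdef t u
    linarith
  have hglip : ∀ s t, g t ≤ g s + γ s t := by
    intro s t
    have key : g t - γ s t ≤ g s := by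
      apply hgle
      intro u
      have h1 : γ t u ≤ γ t s + γ s u := hγtri t s u
      have h2 : γ t s = γ s t := hγsymm t s
      have h3 := hgdef t u
      linarith
    linarith
  have hfmem : f ∈ USB := by
    rw [hUSB]
    refine ⟨fun t => ⟨?_, ?_⟩, fun s t => ?_⟩
    · have := hfdef t t
      have := hγzero t
      linarith
    · apply hfle
      intro u
      have h1 : lo u ≤ φ0 u := (hφ0box u).1
      have h2 : φ0 u - φ0 t ≤ γ u t := (abs_le.1 (hφ0lip u t)).2
      have h3 : φ0 t ≤ hi t := (hφ0box t).2
      linarith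
    · rw [abs_sub_le_iff]
      have h1 := hflip s t
      have h2 := hflip t s
      have h3 := hγsymm s t
      constructor <;> linarith
  have hgmem : g ∈ USB := by
    rw [hUSB]
    refine ⟨fun t => ⟨?_, ?_⟩, fun s t => ?_⟩
    · apply hgle
      intro u
      have h1 : φ0 u ≤ hi u := (hφ0box u).2
      have h2 : φ0 t - φ0 u ≤ γ t u := (abs_le.1 (hφ0lip t u)).2
      have h3 : lo t ≤ φ0 t := (hφ0box t).1
      linarith
    · have := hgdef t t
      have := hγzero t
      linarith
    · rw [abs_sub_le_iff]
      have h1 := hglip s t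
      have h2 := hglip t s
      have h3 := hγsymm s t
      constructor <;> linarith
  have hne' : ((fun φ : T → ℝ => φ v) '' USB).Nonempty := ⟨f v, f, hfmem, rfl⟩
  have hlb : ∀ x ∈ (fun φ : T → ℝ => φ v) '' USB, f v ≤ x := by
    rintro x ⟨φ, hφ, rfl⟩
    rw [hUSB] at hφ
    apply hfle
    intro u
    have h1 : lo u ≤ φ u := (hφ.1 u).1
    have h2 : φ u - φ v ≤ γ u v := (abs_le.1 (hφ.2 u v)).2
    linarith
  have hub : ∀ x ∈ (fun φ : T → ℝ => φ v) '' USB, x ≤ g v := by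
    rintro x ⟨φ, hφ, rfl⟩
    rw [hUSB] at hφ
    apply hgle
    intro u
    have h1 : φ u ≤ hi u := (hφ.1 u).2
    have h2 : φ v - φ u ≤ γ v u := (abs_le.1 (hφ.2 v u)).2
    linarith
  exact ⟨le_antisymm (csInf_le ⟨f v, hlb⟩ ⟨f, hfmem, rfl⟩) (le_csInf hne' hlb),
    le_antisymm (csSup_le hne' hub) (le_csSup ⟨g v, hub⟩ ⟨g, hgmem, rfl⟩)⟩
end

section
/- Let γ be a metric on the finite set T, and define for each v ∈ T, φ̲_v = max_{u∈T}(φ̲⁰_u − γ(u,v)) and φ̄_v = min_{u∈T}(φ̄⁰_u + γ(v,u)). Then for any distinct u, v ∈ T, the two-dimensional projection of U_SB onto coordinates (v, u) equals the hexagonal polytope { (φ_v, φ_u) : φ̲_v ≤ φ_v ≤ φ̄_v, φ̲_u ≤ φ_u ≤ φ̄_u, |φ_v − φ_u| ≤ γ(v,u) }. -/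
/-!
A point of `U_SB` satisfies the tightened bounds, since `lo x - γ x w ≤ φ x - γ x w ≤ φ w` and
dually for `hi`. Conversely, a point `(a, b)` of the hexagon extends to
`φ w = max (a - γ v w, b - γ u w, lov w)`. Each term is `1`-Lipschitz for `γ`, hence so is `φ`;
`lo ≤ lov ≤ φ`; each term is at most `hi w` (for `lov`, because `lov` lies below any point of
`U_SB`); and the hexagon's constraints make the first term dominate at `v`, the second at `u`.
-/

open Finset

section

variable {T : Type*}

def LipschitzWrt (γ : T → T → ℝ) (φ : T → ℝ) : Prop :=
  ∀ w w', |φ w - φ w'| ≤ γ w w'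

namespace LipschitzWrt

variable {γ : T → T → ℝ}

theorem sub_le {φ : T → ℝ} (hφ : LipschitzWrt γ φ) (w w' : T) : φ w - φ w' ≤ γ w w' :=
  (abs_sub_le_iff.mp (hφ w w')).1

theorem max {f g : T → ℝ} (hf : LipschitzWrt γ f) (hg : LipschitzWrt γ g) :
    LipschitzWrt γ fun w => max (f w) (g w) := fun w w' =>
  (abs_max_sub_max_le_max _ _ _ _).trans (max_le (hf w w') (hg w w'))

theorem finset_sup' {ι : Type*} {s : Finset ι} (hs : s.Nonempty) {f : ι → T → ℝ}
    (hf : ∀ i ∈ s, LipschitzWrt γ (f i)) : LipschitzWrt γ fun w => s.sup' hs fun i => f i w := by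
  intro w w'
  rw [abs_sub_le_iff, sub_le_iff_le_add, sub_le_iff_le_add]
  constructor <;> refine sup'_le _ _ fun i hi => ?_
  · linarith [(hf i hi).sub_le w w', le_sup' (fun i => f i w') hi]
  · linarith [(abs_sub_le_iff.mp (hf i hi w w')).2, le_sup' (fun i => f i w) hi]

end LipschitzWrt

theorem lipschitzWrt_const_sub_dist {γ : T → T → ℝ} (hsymm : ∀ u v, γ u v = γ v u)
    (htri : ∀ u v w, γ u w ≤ γ u v + γ v w) (c : ℝ) (x : T) :
    LipschitzWrt γ fun w => c - γ x w := by
  intro w w'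
  dsimp only
  rw [abs_sub_le_iff]
  constructor <;> linarith [htri x w w', htri x w' w, hsymm w w']

section Envelopes

variable [Fintype T] [Nonempty T]

def lowerEnvelope (lo : T → ℝ) (γ : T → T → ℝ) (w : T) : ℝ :=
  univ.sup' univ_nonempty fun x => lo x - γ x w

def upperEnvelope (hi : T → ℝ) (γ : T → T → ℝ) (w : T) : ℝ :=
  univ.inf' univ_nonempty fun x => hi x + γ w x

theorem upperEnvelope_le (hi : T → ℝ) (γ : T → T → ℝ) (w x : T) :
    upperEnvelope hi γ w ≤ hi x + γ w x :=
  inf'_le (fun x => hi x + γ w x) (mem_univ x)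

variable {γ : T → T → ℝ}

theorem self_le_lowerEnvelope (lo : T → ℝ) (hself : ∀ w, γ w w = 0) (w : T) :
    lo w ≤ lowerEnvelope lo γ w :=
  calc lo w = lo w - γ w w := by rw [hself, sub_zero]
    _ ≤ lowerEnvelope lo γ w := le_sup' (fun x => lo x - γ x w) (mem_univ w)

theorem lowerEnvelope_le {lo φ : T → ℝ} (hlo : ∀ w, lo w ≤ φ w) (hφ : LipschitzWrt γ φ) (w : T) :
    lowerEnvelope lo γ w ≤ φ w :=
  sup'_le _ _ fun x _ => by linarith [hlo x, hφ.sub_le x w]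

theorem le_upperEnvelope {hi φ : T → ℝ} (hhi : ∀ w, φ w ≤ hi w) (hφ : LipschitzWrt γ φ) (w : T) :
    φ w ≤ upperEnvelope hi γ w :=
  le_inf' _ _ fun x _ => by linarith [hhi x, hφ.sub_le w x]

theorem lipschitzWrt_lowerEnvelope (lo : T → ℝ) (hsymm : ∀ u v, γ u v = γ v u)
    (htri : ∀ u v w, γ u w ≤ γ u v + γ v w) : LipschitzWrt γ (lowerEnvelope lo γ) :=
  LipschitzWrt.finset_sup' univ_nonempty fun x _ => lipschitzWrt_const_sub_dist hsymm htri (lo x) x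

end Envelopes

section Extension

variable (γ : T → T → ℝ) (g : T → ℝ) (v u : T) (a b : ℝ)

def extendPair (w : T) : ℝ :=
  max (max (a - γ v w) (b - γ u w)) (g w)

variable {γ g v u a b}

theorem lipschitzWrt_extendPair (hsymm : ∀ u v, γ u v = γ v u)
    (htri : ∀ u v w, γ u w ≤ γ u v + γ v w) (hg : LipschitzWrt γ g) :
    LipschitzWrt γ (extendPair γ g v u a b) :=
  ((lipschitzWrt_const_sub_dist hsymm htri a v).max
    (lipschitzWrt_const_sub_dist hsymm htri b u)).max hg

theorem extendPair_apply_left (hself : ∀ w, γ w w = 0) (hsymm : ∀ u v, γ u v = γ v u)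
    (hab : |a - b| ≤ γ v u) (hg : g v ≤ a) : extendPair γ g v u a b v = a := by
  have : b - γ u v ≤ a := by linarith [(abs_sub_le_iff.mp hab).2, hsymm u v]
  simp only [extendPair, hself, sub_zero, max_eq_left this, max_eq_left hg]

theorem extendPair_apply_right (hself : ∀ w, γ w w = 0) (hab : |a - b| ≤ γ v u) (hg : g u ≤ b) :
    extendPair γ g v u a b u = b := by
  have : a - γ v u ≤ b := by linarith [(abs_sub_le_iff.mp hab).1]
  simp only [extendPair, hself, sub_zero, max_eq_right this, max_eq_left hg]

end Extension

end

theorem stmt6_general {T : Type*} [Fintype T] [Nonempty T]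
    (lo hi : T → ℝ)
    (γ : T → T → ℝ)
    (hγ0 : ∀ u v, γ u v = 0 ↔ u = v)
    (hγsymm : ∀ u v, γ u v = γ v u)
    (hγtri : ∀ u v w, γ u w ≤ γ u v + γ v w)
    (USB : Set (T → ℝ))
    (hUSB : USB = {φ : T → ℝ | (∀ w, lo w ≤ φ w ∧ φ w ≤ hi w) ∧
        ∀ w w', |φ w - φ w'| ≤ γ w w'})
    (hne : USB.Nonempty)
    (lov hiv : T → ℝ)
    (hlov : ∀ w, lov w = Finset.univ.sup' Finset.univ_nonempty (fun u => lo u - γ u w))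
    (hhiv : ∀ w, hiv w = Finset.univ.inf' Finset.univ_nonempty (fun u => hi u + γ w u))
    (v u : T) :
    (fun φ : T → ℝ => (φ v, φ u)) '' USB
      = {p : ℝ × ℝ | lov v ≤ p.1 ∧ p.1 ≤ hiv v ∧ lov u ≤ p.2 ∧ p.2 ≤ hiv u ∧
          |p.1 - p.2| ≤ γ v u} := by
  subst hUSB
  obtain rfl : lov = lowerEnvelope lo γ := funext hlov
  obtain rfl : hiv = upperEnvelope hi γ := funext hhiv
  have hself : ∀ w, γ w w = 0 := fun w => (hγ0 w w).mpr rfl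
  obtain ⟨φ₀, hφ₀b, hφ₀⟩ := hne
  have hlov_le_hi : ∀ w, lowerEnvelope lo γ w ≤ hi w := fun w =>
    (lowerEnvelope_le (fun w => (hφ₀b w).1) hφ₀ w).trans (hφ₀b w).2
  ext p
  constructor
  · rintro ⟨φ, ⟨hb, hφ⟩, rfl⟩
    have hlo w := lowerEnvelope_le (fun w => (hb w).1) hφ w
    have hhi w := le_upperEnvelope (fun w => (hb w).2) hφ w
    exact ⟨hlo v, hhi v, hlo u, hhi u, hφ v u⟩
  · obtain ⟨a, b⟩ := p
    rintro ⟨hav, hva, hbu, hub, hab⟩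
    refine ⟨extendPair γ (lowerEnvelope lo γ) v u a b, ⟨fun w => ⟨?_, ?_⟩,
      lipschitzWrt_extendPair hγsymm hγtri (lipschitzWrt_lowerEnvelope lo hγsymm hγtri)⟩, ?_⟩
    · exact (self_le_lowerEnvelope lo hself w).trans (le_max_right _ _)
    · refine max_le (max_le ?_ ?_) (hlov_le_hi w)
      · linarith [upperEnvelope_le hi γ v w]
      · linarith [upperEnvelope_le hi γ u w]
    · exact Prod.ext (extendPair_apply_left hself hγsymm hab hav)
        (extendPair_apply_right hself hab hbu)

/-- With γ a metric on finite T and tightened bounds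
lov w = max_u (lo u − γ u w), hiv w = min_u (hi u + γ w u), the two-dimensional
projection of the nonempty U_SB onto coordinates (v,u) equals the hexagon. -/
theorem stmt6 {T : Type*} [Fintype T] [Nonempty T]
    (lo hi : T → ℝ) (hlohi : ∀ u, lo u ≤ hi u)
    (γ : T → T → ℝ)
    (hγnn : ∀ u v, 0 ≤ γ u v)
    (hγ0 : ∀ u v, γ u v = 0 ↔ u = v)
    (hγsymm : ∀ u v, γ u v = γ v u)
    (hγtri : ∀ u v w, γ u w ≤ γ u v + γ v w)
    (hγle1 : ∀ u v, γ u v ≤ 1)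
    (USB : Set (T → ℝ))
    (hUSB : USB = {φ : T → ℝ | (∀ w, lo w ≤ φ w ∧ φ w ≤ hi w) ∧
        ∀ w w', |φ w - φ w'| ≤ γ w w'})
    (hne : USB.Nonempty)
    (lov hiv : T → ℝ)
    (hlov : ∀ w, lov w = Finset.univ.sup' Finset.univ_nonempty (fun u => lo u - γ u w))
    (hhiv : ∀ w, hiv w = Finset.univ.inf' Finset.univ_nonempty (fun u => hi u + γ w u))
    (v u : T) (hvu : u ≠ v) :
    (fun φ : T → ℝ => (φ v, φ u)) '' USB
      = {p : ℝ × ℝ | lov v ≤ p.1 ∧ p.1 ≤ hiv v ∧ lov u ≤ p.2 ∧ p.2 ≤ hiv u ∧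
          |p.1 - p.2| ≤ γ v u} :=
  stmt6_general lo hi γ hγ0 hγsymm hγtri USB hUSB hne lov hiv hlov hhiv v u
end
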